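/- Let X̄ ∈ R^{n×p} satisfy: ri(∂‖·‖_*(X̄)) ∩ rge A* ≠ ∅ and par(∂‖·‖_*(X̄)) + rge A* = R^{n×p}, for a linear map A : R^{n×p} → E. Then R^{n×p} = rge A* + R₊ · ∂‖·‖_*(X̄), where R₊ C = {t x : t ≥ 0, x ∈ C}. -/

import Mathlib

open Matrix

noncomputable def nuclearNorm {m n : Type*} [Fintype m] [Fintype n] [DecidableEq n]
    (A : Matrix m n ℝ) : ℝ :=
  (((Matrix.posSemidef_conjTranspose_mul_self A).1.eigenvectorUnitary : Matrix n n ℝ) *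
      Matrix.diagonal ((fun x : ℝ => x) ∘ (√·) ∘ (Matrix.posSemidef_conjTranspose_mul_self A).1.eigenvalues) *
      star ((Matrix.posSemidef_conjTranspose_mul_self A).1.eigenvectorUnitary :
        Matrix n n ℝ) : Matrix n n ℝ).trace

noncomputable def opNorm {m n : Type*} [Fintype m] [Fintype n] [DecidableEq m] [DecidableEq n]
    (A : Matrix m n ℝ) : ℝ :=
  ‖(LinearMap.toContinuousLinearMap
      (Matrix.toEuclideanLin A : EuclideanSpace ℝ n →ₗ[ℝ] EuclideanSpace ℝ m))‖

def finner {m n : Type*} [Fintype m] [Fintype n] (A B : Matrix m n ℝ) : ℝ :=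
  (Aᵀ * B).trace

noncomputable def nuclearSubdiff {m n : Type*} [Fintype m] [Fintype n] [DecidableEq n]
    (X : Matrix m n ℝ) : Set (Matrix m n ℝ) :=
  {Y | ∀ Z, nuclearNorm X + finner Y (Z - X) ≤ nuclearNorm Z}

def rectDiag (n p : ℕ) (s : Fin p → ℝ) : Matrix (Fin n) (Fin p) ℝ :=
  Matrix.of fun i j => if (i : ℕ) = (j : ℕ) then s j else 0

def blockIR (n p r : ℕ) (R : Matrix (Fin (n - r)) (Fin (p - r)) ℝ) :
    Matrix (Fin n) (Fin p) ℝ :=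
  Matrix.of fun i j =>
    if h : (i : ℕ) < r ∨ (j : ℕ) < r then (if (i : ℕ) = (j : ℕ) then 1 else 0)
    else R ⟨i - r, by have := i.isLt; omega⟩ ⟨j - r, by have := j.isLt; omega⟩

/-- The range of the adjoint $\mathcal{A}^*$, described via the Frobenius inner product. -/
def rgeAstar {n p : ℕ} {E : Type*} [NormedAddCommGroup E] [InnerProductSpace ℝ E]
    (A : Matrix (Fin n) (Fin p) ℝ →ₗ[ℝ] E) : Set (Matrix (Fin n) (Fin p) ℝ) :=
  {M | ∃ y : E, ∀ Z, finner M Z = (inner ℝ y (A Z) : ℝ)}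

/-!
Take `W` in the relative interior of `∂‖·‖_*(X̄)` and in `rge 𝒜*`, and write any `M` as `V + S`
with `V` parallel to `∂‖·‖_*(X̄)` and `S ∈ rge 𝒜*`. For small `ε > 0` the point `W + εV` still lies
in `∂‖·‖_*(X̄)`, and `M = (S - ε⁻¹W) + ε⁻¹(W + εV)`, the first summand lying in the subspace
`rge 𝒜*`.
-/

open Set Topology

theorem exists_pos_add_smul_mem_of_mem_intrinsicInterior {V : Type*} [AddCommGroup V]
    [Module ℝ V] [TopologicalSpace V] [ContinuousAdd V] [ContinuousSMul ℝ V]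
    {s : Set V} {w v : V} (hw : w ∈ intrinsicInterior ℝ s) (hv : v ∈ vectorSpan ℝ s) :
    ∃ ε : ℝ, 0 < ε ∧ w + ε • v ∈ s := by
  obtain ⟨w, hw, rfl⟩ := hw
  have hline : ∀ t : ℝ, t • v +ᵥ (w : V) ∈ affineSpan ℝ s := fun t =>
    AffineSubspace.vadd_mem_of_mem_direction
      (by rw [direction_affineSpan]; exact Submodule.smul_mem _ t hv) w.2
  let line : ℝ → affineSpan ℝ s := fun t => ⟨t • v +ᵥ (w : V), hline t⟩
  have hcont : Continuous line := by
    refine Continuous.subtype_mk ?_ _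
    fun_prop
  have hnear : ∀ᶠ t in 𝓝 0, line t ∈ interior ((↑) ⁻¹' s : Set (affineSpan ℝ s)) :=
    hcont.continuousAt.preimage_mem_nhds (by simpa [line] using isOpen_interior.mem_nhds hw)
  obtain ⟨ε, hεs, hεpos⟩ :=
    ((hnear.filter_mono nhdsWithin_le_nhds).and (self_mem_nhdsWithin (s := Ioi 0))).exists
  exact ⟨ε, hεpos, by simpa [line, add_comm] using interior_subset hεs⟩

open Pointwise in
theorem univ_eq_add_cone_of_mem_intrinsicInterior {V : Type*} [AddCommGroup V]
    [Module ℝ V] [TopologicalSpace V] [ContinuousAdd V] [ContinuousSMul ℝ V]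
    {s : Set V} (R : Submodule ℝ V) {w : V} (hw : w ∈ intrinsicInterior ℝ s) (hwR : w ∈ R)
    (hspan : (vectorSpan ℝ s : Set V) + (R : Set V) = univ) :
    (univ : Set V) = (R : Set V) + {M | ∃ t : ℝ, 0 ≤ t ∧ ∃ C ∈ s, M = t • C} := by
  refine (eq_univ_of_forall fun x => ?_).symm
  obtain ⟨v, hv, r, hr, rfl⟩ := mem_add.mp (hspan.symm ▸ mem_univ x)
  obtain ⟨ε, hε, hwv⟩ := exists_pos_add_smul_mem_of_mem_intrinsicInterior hw hv
  refine mem_add.mpr ⟨r - ε⁻¹ • w, R.sub_mem hr (R.smul_mem _ hwR), ε⁻¹ • (w + ε • v),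
    ⟨ε⁻¹, by positivity, _, hwv, rfl⟩, ?_⟩
  rw [smul_add, smul_smul, inv_mul_cancel₀ hε.ne', one_smul]
  abel

theorem finner_add_left {m n : Type*} [Fintype m] [Fintype n] (M N Z : Matrix m n ℝ) :
    finner (M + N) Z = finner M Z + finner N Z := by
  simp [finner, Matrix.add_mul]

theorem finner_smul_left {m n : Type*} [Fintype m] [Fintype n] (c : ℝ) (M Z : Matrix m n ℝ) :
    finner (c • M) Z = c * finner M Z := by
  simp [finner]

def rgeAstarSubmodule {n p : ℕ} {E : Type*} [NormedAddCommGroup E] [InnerProductSpace ℝ E]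
    (A : Matrix (Fin n) (Fin p) ℝ →ₗ[ℝ] E) : Submodule ℝ (Matrix (Fin n) (Fin p) ℝ) where
  carrier := rgeAstar A
  zero_mem' := ⟨0, fun Z => by simp [finner]⟩
  add_mem' := by
    rintro M N ⟨y, hy⟩ ⟨z, hz⟩
    exact ⟨y + z, fun Z => by rw [finner_add_left, hy, hz, inner_add_left]⟩
  smul_mem' := by
    rintro c M ⟨y, hy⟩
    exact ⟨c • y, fun Z => by rw [finner_smul_left, hy, real_inner_smul_left]⟩

open Pointwise in
theorem space_eq_rgeAstar_add_cone_subdiff_general {n p : ℕ} {E : Type*}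
    [NormedAddCommGroup E] [InnerProductSpace ℝ E]
    (A : Matrix (Fin n) (Fin p) ℝ →ₗ[ℝ] E)
    (Xb : Matrix (Fin n) (Fin p) ℝ)
    (hri : (intrinsicInterior ℝ (nuclearSubdiff Xb) ∩ rgeAstar A).Nonempty)
    (hpar : (↑(vectorSpan ℝ (nuclearSubdiff Xb)) : Set (Matrix (Fin n) (Fin p) ℝ))
        + rgeAstar A = Set.univ) :
    (Set.univ : Set (Matrix (Fin n) (Fin p) ℝ))
      = rgeAstar A + {M | ∃ t : ℝ, 0 ≤ t ∧ ∃ C ∈ nuclearSubdiff Xb, M = t • C} := by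
  obtain ⟨W, hWint, hWrge⟩ := hri
  exact univ_eq_add_cone_of_mem_intrinsicInterior (rgeAstarSubmodule A) hWint hWrge hpar

open Pointwise in
theorem space_eq_rgeAstar_add_cone_subdiff {n p : ℕ} {E : Type*}
    [NormedAddCommGroup E] [InnerProductSpace ℝ E] [FiniteDimensional ℝ E]
    (A : Matrix (Fin n) (Fin p) ℝ →ₗ[ℝ] E)
    (Xb : Matrix (Fin n) (Fin p) ℝ)
    (hri : (intrinsicInterior ℝ (nuclearSubdiff Xb) ∩ rgeAstar A).Nonempty)
    (hpar : (↑(vectorSpan ℝ (nuclearSubdiff Xb)) : Set (Matrix (Fin n) (Fin p) ℝ))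
        + rgeAstar A = Set.univ) :
    (Set.univ : Set (Matrix (Fin n) (Fin p) ℝ))
      = rgeAstar A + {M | ∃ t : ℝ, 0 ≤ t ∧ ∃ C ∈ nuclearSubdiff Xb, M = t • C} :=
  space_eq_rgeAstar_add_cone_subdiff_general A Xb hri hpar
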